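/- Let E be a real normed vector space and (Ω, 𝓕, ℙ) a probability space. Let K' ∈ ℕ, and for k ∈ {1, …, K'} let α_k ∈ (0,1), β_k = 1 − α_k, ᾱ_k = ∏_{s=1}^{k} α_s, let ε_θ(·, k) : E → E be L-Lipschitz, μ_k(A) = (1/√α_k)(A − (β_k/√(1−ᾱ_k)) ε_θ(A, k)), and c_k = (√(1−ᾱ_k) + β_k·L)/√(α_k·(1−ᾱ_k)). Let Ã_k, A_k : Ω → E (k = 0, …, K') be random variables satisfying, pointwise on Ω, Ã_{k−1} = μ_k(Ã_k) + σ_k·Y_k and A_{k−1} = μ_k(A_k) + σ_k·Y_k with the same random noises Y_k : Ω → E and σ_k ∈ ℝ. If the error ω ↦ ‖Ã_{K'}(ω) − A_{K'}(ω)‖ is integrable, then ω ↦ ‖Ã_0(ω) − A_0(ω)‖ is integrable and 𝔼[‖Ã_0 − A_0‖] ≤ (∏_{k=1}^{K'} c_k) · 𝔼[‖Ã_{K'} − A_{K'}‖]. -/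

import Mathlib

/-!
Subtracting the two reverse steps cancels the shared noise `σₖ • Yₖ`, so the error is transported
by the posterior-mean map `μₖ` alone. Writing `μₖ x = s • (x - t • ε x)` with
`s = 1/√αₖ`, `t = βₖ/√(1-ᾱₖ)`, the triangle inequality and the Lipschitz bound on `ε` make `μₖ`
Lipschitz with constant `s (1 + t L) = cₖ`. Integrating this pointwise bound and iterating it from
`K'` down to `0` gives the estimate, with integrability propagated by domination.
-/

open MeasureTheory Finset

theorem nonneg_of_norm_sub_le_mul_norm_sub {E F : Type*} [NormedAddCommGroup E] [Nontrivial E]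
    [SeminormedAddCommGroup F] {f : E → F} {L : ℝ} (hf : ∀ x y, ‖f x - f y‖ ≤ L * ‖x - y‖) :
    0 ≤ L := by
  obtain ⟨x, y, hxy⟩ := exists_pair_ne E
  have hpos : 0 < ‖x - y‖ := norm_pos_iff.mpr (sub_ne_zero.mpr hxy)
  exact nonneg_of_mul_nonneg_left ((norm_nonneg _).trans (hf x y)) hpos

theorem norm_smul_sub_smul_sub_le {E : Type*} [SeminormedAddCommGroup E] [NormedSpace ℝ E]
    {ε : E → E} {L s t : ℝ} (hs : 0 ≤ s) (ht : 0 ≤ t)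
    (hε : ∀ x y, ‖ε x - ε y‖ ≤ L * ‖x - y‖) (x y : E) :
    ‖s • (x - t • ε x) - s • (y - t • ε y)‖ ≤ s * (1 + t * L) * ‖x - y‖ := by
  have hsplit : s • (x - t • ε x) - s • (y - t • ε y) = s • ((x - y) - t • (ε x - ε y)) := by
    simp only [smul_sub]; abel
  rw [hsplit, norm_smul, Real.norm_of_nonneg hs, mul_assoc]
  gcongr
  calc ‖(x - y) - t • (ε x - ε y)‖ ≤ ‖x - y‖ + t * ‖ε x - ε y‖ := by
        grw [norm_sub_le, norm_smul, Real.norm_of_nonneg ht]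
    _ ≤ ‖x - y‖ + t * (L * ‖x - y‖) := by gcongr; exact hε x y
    _ = (1 + t * L) * ‖x - y‖ := by ring

theorem one_div_sqrt_mul_one_add_div_sqrt_mul {a a' b L : ℝ} (ha : 0 < a) (ha' : a' < 1) :
    1 / √a * (1 + b / √(1 - a') * L) = (√(1 - a') + b * L) / √(a * (1 - a')) := by
  have hsqrt : 0 < √(1 - a') := Real.sqrt_pos.mpr (by linarith)
  rw [Real.sqrt_mul ha.le]
  field_simp

section Iteration

variable {Ω : Type*} [MeasurableSpace Ω] {μ : Measure Ω}

theorem integrable_and_integral_le_const_mul {f g : Ω → ℝ} {c : ℝ} (hf : Integrable f μ)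
    (hg : AEStronglyMeasurable g μ) (hg0 : 0 ≤ᵐ[μ] g) (hgf : ∀ᵐ ω ∂μ, g ω ≤ c * f ω) :
    Integrable g μ ∧ ∫ ω, g ω ∂μ ≤ c * ∫ ω, f ω ∂μ := by
  have hg_int : Integrable g μ := by
    refine (hf.const_mul c).mono' hg ?_
    filter_upwards [hg0, hgf] with ω h0 hle
    rwa [Real.norm_of_nonneg h0]
  exact ⟨hg_int, integral_const_mul c f ▸ integral_mono_ae hg_int (hf.const_mul c) hgf⟩

theorem integrable_and_integral_le_prod_mul {f : ℕ → Ω → ℝ} {c : ℕ → ℝ} (n : ℕ)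
    (hf : ∀ k, AEStronglyMeasurable (f k) μ) (hf0 : ∀ k, 0 ≤ᵐ[μ] f k)
    (hc : ∀ k ∈ Icc 1 n, 0 ≤ c k)
    (hstep : ∀ k ∈ Icc 1 n, ∀ᵐ ω ∂μ, f (k - 1) ω ≤ c k * f k ω) (hn : Integrable (f n) μ) :
    Integrable (f 0) μ ∧ ∫ ω, f 0 ω ∂μ ≤ (∏ k ∈ Icc 1 n, c k) * ∫ ω, f n ω ∂μ := by
  induction n with
  | zero => simpa using hn
  | succ n ih =>
    have hmem : n + 1 ∈ Icc 1 (n + 1) := by simp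
    have hsub : Icc 1 n ⊆ Icc 1 (n + 1) := Icc_subset_Icc_right n.le_succ
    obtain ⟨hn_int, hn_le⟩ :=
      integrable_and_integral_le_const_mul hn (hf n) (hf0 n) (hstep (n + 1) hmem)
    obtain ⟨h0_int, h0_le⟩ :=
      ih (fun k hk => hc k (hsub hk)) (fun k hk => hstep k (hsub hk)) hn_int
    have hprod : 0 ≤ ∏ k ∈ Icc 1 n, c k := prod_nonneg fun k hk => hc k (hsub hk)
    refine ⟨h0_int, ?_⟩
    calc ∫ ω, f 0 ω ∂μ ≤ (∏ k ∈ Icc 1 n, c k) * ∫ ω, f n ω ∂μ := h0_le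
      _ ≤ (∏ k ∈ Icc 1 n, c k) * (c (n + 1) * ∫ ω, f (n + 1) ω ∂μ) := by gcongr
      _ = (∏ k ∈ Icc 1 (n + 1), c k) * ∫ ω, f (n + 1) ω ∂μ := by
        rw [prod_Icc_succ_top (by omega), mul_assoc]

end Iteration

theorem rti_dp_expected_contractivity_general
    {E : Type*} [NormedAddCommGroup E] [NormedSpace ℝ E]
    {Ω : Type*} [MeasurableSpace Ω] (P : Measure Ω)
    (K' : ℕ) (α : ℕ → ℝ) (L : ℝ)
    (hα : ∀ k ∈ Finset.Icc 1 K', α k ∈ Set.Ioo (0 : ℝ) 1)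
    (β : ℕ → ℝ) (hβ : ∀ k, β k = 1 - α k)
    (αbar : ℕ → ℝ)
    (hαbar01 : ∀ k ∈ Finset.Icc 1 K', αbar k ∈ Set.Ioo (0 : ℝ) 1)
    (εθ : E → ℕ → E)
    (hLip : ∀ k, ∀ A B : E, ‖εθ A k - εθ B k‖ ≤ L * ‖A - B‖)
    (μ : ℕ → E → E)
    (hμ : ∀ k (A : E), μ k A =
      (1 / Real.sqrt (α k)) • (A - (β k / Real.sqrt (1 - αbar k)) • εθ A k))
    (c : ℕ → ℝ)
    (hc : ∀ k, c k =
      (Real.sqrt (1 - αbar k) + β k * L) / Real.sqrt (α k * (1 - αbar k)))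
    (σ : ℕ → ℝ) (Y : ℕ → Ω → E) (Atil A : ℕ → Ω → E)
    (hmeasTil : ∀ k, AEStronglyMeasurable (Atil k) P)
    (hmeas : ∀ k, AEStronglyMeasurable (A k) P)
    (hAtil : ∀ k ∈ Finset.Icc 1 K', ∀ ω : Ω,
      Atil (k - 1) ω = μ k (Atil k ω) + σ k • Y k ω)
    (hA : ∀ k ∈ Finset.Icc 1 K', ∀ ω : Ω,
      A (k - 1) ω = μ k (A k ω) + σ k • Y k ω)
    (hInt : Integrable (fun ω => ‖Atil K' ω - A K' ω‖) P) :
    Integrable (fun ω => ‖Atil 0 ω - A 0 ω‖) P ∧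
      ∫ ω, ‖Atil 0 ω - A 0 ω‖ ∂P ≤
        (∏ k ∈ Finset.Icc 1 K', c k) * ∫ ω, ‖Atil K' ω - A K' ω‖ ∂P := by
  rcases subsingleton_or_nontrivial E with hE | hE
  · have hsub_eq_zero : ∀ x y : E, x - y = 0 := fun _ _ => Subsingleton.elim _ _
    simp [hsub_eq_zero]
  have hL : 0 ≤ L := nonneg_of_norm_sub_le_mul_norm_sub (hLip 0)
  have hβ0 : ∀ k ∈ Icc 1 K', 0 ≤ β k := fun k hk => by linarith [hβ k, (hα k hk).2]
  have hc_eq : ∀ k ∈ Icc 1 K', c k = 1 / √(α k) * (1 + β k / √(1 - αbar k) * L) :=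
    fun k hk => by rw [hc, one_div_sqrt_mul_one_add_div_sqrt_mul (hα k hk).1 (hαbar01 k hk).2]
  refine integrable_and_integral_le_prod_mul (f := fun k ω => ‖Atil k ω - A k ω‖) K'
    (fun k => ((hmeasTil k).sub (hmeas k)).norm) (fun k => .of_forall fun ω => norm_nonneg _)
    (fun k hk => by rw [hc_eq k hk]; have := hβ0 k hk; positivity)
    (fun k hk => .of_forall fun ω => ?_) hInt
  rw [hAtil k hk, hA k hk, add_sub_add_right_eq_sub, hμ, hμ, hc_eq k hk]
  exact norm_smul_sub_smul_sub_le (by positivity) (div_nonneg (hβ0 k hk) (by positivity))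
    (hLip k) _ _

/-- **Expectation form of local contractivity for RTI-DP.** Two reverse DDPM
chains of random variables, run pointwise with the same noise realizations,
satisfy `𝔼[‖Ã₀ − A₀‖] ≤ (∏ₖ cₖ) 𝔼[‖Ã_{K'} − A_{K'}‖]` (and integrability of the
final error), where `cₖ = (√(1−ᾱₖ) + βₖ L)/√(αₖ (1−ᾱₖ))`. -/
theorem rti_dp_expected_contractivity
    {E : Type*} [NormedAddCommGroup E] [NormedSpace ℝ E]
    {Ω : Type*} [MeasurableSpace Ω] (P : Measure Ω) [IsProbabilityMeasure P]
    (K' : ℕ) (α : ℕ → ℝ) (L : ℝ)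
    (hα : ∀ k ∈ Finset.Icc 1 K', α k ∈ Set.Ioo (0 : ℝ) 1)
    (β : ℕ → ℝ) (hβ : ∀ k, β k = 1 - α k)
    (αbar : ℕ → ℝ) (hαbar : ∀ k, αbar k = ∏ s ∈ Finset.Icc 1 k, α s)
    (hαbar01 : ∀ k ∈ Finset.Icc 1 K', αbar k ∈ Set.Ioo (0 : ℝ) 1)
    (εθ : E → ℕ → E)
    (hLip : ∀ k, ∀ A B : E, ‖εθ A k - εθ B k‖ ≤ L * ‖A - B‖)
    (μ : ℕ → E → E)
    (hμ : ∀ k (A : E), μ k A =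
      (1 / Real.sqrt (α k)) • (A - (β k / Real.sqrt (1 - αbar k)) • εθ A k))
    (c : ℕ → ℝ)
    (hc : ∀ k, c k =
      (Real.sqrt (1 - αbar k) + β k * L) / Real.sqrt (α k * (1 - αbar k)))
    (σ : ℕ → ℝ) (Y : ℕ → Ω → E) (Atil A : ℕ → Ω → E)
    (hmeasTil : ∀ k, AEStronglyMeasurable (Atil k) P)
    (hmeas : ∀ k, AEStronglyMeasurable (A k) P)
    (hAtil : ∀ k ∈ Finset.Icc 1 K', ∀ ω : Ω,
      Atil (k - 1) ω = μ k (Atil k ω) + σ k • Y k ω)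
    (hA : ∀ k ∈ Finset.Icc 1 K', ∀ ω : Ω,
      A (k - 1) ω = μ k (A k ω) + σ k • Y k ω)
    (hInt : Integrable (fun ω => ‖Atil K' ω - A K' ω‖) P) :
    Integrable (fun ω => ‖Atil 0 ω - A 0 ω‖) P ∧
      ∫ ω, ‖Atil 0 ω - A 0 ω‖ ∂P ≤
        (∏ k ∈ Finset.Icc 1 K', c k) * ∫ ω, ‖Atil K' ω - A K' ω‖ ∂P :=
  rti_dp_expected_contractivity_general P K' α L hα β hβ αbar hαbar01 εθ hLip μ hμ c hc σ Y Atil A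
    hmeasTil hmeas hAtil hA hInt
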